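/- Let c : ℝ^d × ℝ^d → ℝ be continuous and bounded. Let h̄ be a nonnegative function in L^∞(ℝ^d × ℝ^d) with compact support, and let f, g be nonnegative compactly supported functions in L¹(ℝ^d) with equal total mass such that Γ(f,g)^h̄ is nonempty. Then the infimum of I_c over Γ(f,g)^h̄ is attained: there exists h* ∈ Γ(f,g)^h̄ with I_c(h*) ≤ I_c(h) for every h ∈ Γ(f,g)^h̄. -/

import Mathlib

/-!
Embed `Γ(f,g)^h̄` in `L²`. Since `0 ≤ h ≤ h̄` and `h̄ ∈ L²`, the set is bounded; positivity,
domination and the two marginal constraints are conditions on the integrals `∫_S h` over sets `S`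
of finite measure, i.e. on inner products with indicators, so the set is weakly closed, hence
weakly compact by Banach–Alaoglu. Every admissible plan vanishes outside the compact
`K = tsupport h̄`, so `I_c(h) = ⟪c·1_K, h⟫` is weakly continuous on the set and attains its minimum.
-/

open MeasureTheory Filter Set Topology

noncomputable section

/-- The transportation cost `I_c(h) = ∫∫ c(x,y) h(x,y) dx dy` on `ℝ^d × ℝ^d`. -/
def Icost {d : ℕ} (c h : ((Fin d → ℝ) × (Fin d → ℝ)) → ℝ) : ℝ :=
  ∫ p, c p * h p

/-- `h ∈ Γ(f,g)`: `h` is a nonnegative integrable joint density on `ℝ^d × ℝ^d`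
with marginals `f` and `g`. -/
def InGamma {d : ℕ} (f g : (Fin d → ℝ) → ℝ)
    (h : ((Fin d → ℝ) × (Fin d → ℝ)) → ℝ) : Prop :=
  Integrable h volume ∧ (∀ᵐ p ∂volume, 0 ≤ h p) ∧
    (∀ᵐ x ∂volume, (∫ y, h (x, y)) = f x) ∧
    (∀ᵐ y ∂volume, (∫ x, h (x, y)) = g y)

/-- `h ∈ Γ(f,g)^h̄`: `h ∈ Γ(f,g)` and `h` is dominated by `h̄` a.e. -/
def InGammaBar {d : ℕ} (f g : (Fin d → ℝ) → ℝ)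
    (hbar h : ((Fin d → ℝ) × (Fin d → ℝ)) → ℝ) : Prop :=
  InGamma f g h ∧ ∀ᵐ p ∂volume, h p ≤ hbar p

open Bornology
open scoped ENNReal

section WeakCompactness

variable {𝕜 E : Type*} [RCLike 𝕜] [NormedAddCommGroup E] [InnerProductSpace 𝕜 E]

theorem WeakSpace.continuous_inner_left (v : E) :
    Continuous fun x : WeakSpace 𝕜 E => inner 𝕜 v ((toWeakSpace 𝕜 E).symm x) :=
  WeakBilin.eval_continuous _ (innerSL 𝕜 v)

open InnerProductSpace in
/-- Banach–Alaoglu, transported from the weak-* topology of the dual to the weak topology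
through the Riesz representation. -/
theorem WeakSpace.isCompact_of_isBounded_of_isClosed [CompleteSpace E] {S : Set (WeakSpace 𝕜 E)}
    (hb : IsBounded (toWeakSpace 𝕜 E ⁻¹' S)) (hS : IsClosed S) : IsCompact S := by
  let repr : WeakDual 𝕜 E → WeakSpace 𝕜 E := fun L =>
    toWeakSpace 𝕜 E ((toDual 𝕜 E).symm (WeakDual.toStrongDual L))
  have hrepr : Continuous repr := by
    refine WeakBilin.continuous_of_continuous_eval _ fun ℓ => ?_
    convert (RCLike.continuous_conj (K := 𝕜)).comp
      (WeakDual.eval_continuous ((toDual 𝕜 E).symm ℓ)) using 1 with L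
    ext L
    calc ℓ ((toDual 𝕜 E).symm (WeakDual.toStrongDual L))
        = inner 𝕜 ((toDual 𝕜 E).symm ℓ) ((toDual 𝕜 E).symm (WeakDual.toStrongDual L)) :=
          (toDual_symm_apply ..).symm
      _ = starRingEnd 𝕜 (L ((toDual 𝕜 E).symm ℓ)) := by
          rw [← inner_conj_symm, toDual_symm_apply]; rfl
  obtain ⟨R, hR⟩ := hb.subset_closedBall 0
  have hS_eq : S = repr '' (WeakDual.toStrongDual ⁻¹' Metric.closedBall 0 R ∩ repr ⁻¹' S) := by
    refine Subset.antisymm (fun x hx => ?_) (image_subset_iff.2 inter_subset_right)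
    obtain ⟨y, rfl⟩ := (toWeakSpace 𝕜 E).surjective x
    have hrepr_y : repr (StrongDual.toWeakDual (toDual 𝕜 E y)) = toWeakSpace 𝕜 E y := by
      simp [repr]
    refine ⟨StrongDual.toWeakDual (toDual 𝕜 E y), ⟨?_, ?_⟩, hrepr_y⟩
    · simpa using hR (show y ∈ toWeakSpace 𝕜 E ⁻¹' S from hx)
    · rwa [mem_preimage, hrepr_y]
  rw [hS_eq]
  exact ((WeakDual.isCompact_closedBall 0 R).inter_right (hS.preimage hrepr)).image hrepr

end WeakCompactness

section Integrals

variable {α : Type*} [MeasurableSpace α] {μ : Measure α}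

theorem ae_le_iff_forall_setIntegral_le_of_sigmaFinite [SigmaFinite μ] {f g : α → ℝ}
    (hf : ∀ s, MeasurableSet s → μ s < ⊤ → IntegrableOn f s μ)
    (hg : ∀ s, MeasurableSet s → μ s < ⊤ → IntegrableOn g s μ) :
    f ≤ᵐ[μ] g ↔ ∀ s, MeasurableSet s → μ s < ⊤ → ∫ x in s, f x ∂μ ≤ ∫ x in s, g x ∂μ := by
  refine ⟨fun h s hs hμs => setIntegral_mono_ae (hf s hs hμs) (hg s hs hμs) h, fun h => ?_⟩
  rw [← eventually_sub_nonneg]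
  refine ae_nonneg_of_forall_setIntegral_nonneg_of_sigmaFinite
    (fun s hs hμs => (hg s hs hμs).sub (hf s hs hμs)) fun s hs hμs => ?_
  change 0 ≤ ∫ x in s, g x - f x ∂μ
  rw [integral_sub (hg s hs hμs) (hf s hs hμs), sub_nonneg]
  exact h s hs hμs

theorem L2.continuous_setIntegral_toWeakSpace_symm {s : Set α} (hs : MeasurableSet s)
    (hμs : μ s ≠ ⊤) :
    Continuous fun x : WeakSpace ℝ (α →₂[μ] ℝ) => ∫ a in s, (toWeakSpace ℝ _).symm x a ∂μ := by
  simpa only [L2.inner_indicatorConstLp_one] using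
    WeakSpace.continuous_inner_left (𝕜 := ℝ) (indicatorConstLp 2 hs hμs (1 : ℝ))

theorem L2.continuous_integral_mul_toWeakSpace_symm {φ : α → ℝ} (hφ : MemLp φ 2 μ) :
    Continuous fun x : WeakSpace ℝ (α →₂[μ] ℝ) => ∫ a, φ a * (toWeakSpace ℝ _).symm x a ∂μ := by
  convert WeakSpace.continuous_inner_left (𝕜 := ℝ) (hφ.toLp φ) using 1
  ext x
  rw [L2.inner_def]
  refine integral_congr_ae ?_
  filter_upwards [hφ.coeFn_toLp] with a ha
  simp [ha, mul_comm]

theorem ae_eq_zero_of_notMem_of_ae_le {u v : α → ℝ} {K : Set α} (h0 : 0 ≤ᵐ[μ] u)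
    (hle : u ≤ᵐ[μ] v) (hv : ∀ p ∉ K, v p = 0) :
    ∀ᵐ p ∂μ, p ∉ K → u p = 0 := by
  filter_upwards [h0, hle] with p hp0 hple hpK
  exact le_antisymm (hple.trans_eq (hv p hpK)) hp0

theorem Continuous.memLp_indicator_of_isCompact {X E : Type*} [TopologicalSpace X] [T2Space X]
    [MeasurableSpace X] [OpensMeasurableSpace X] {μ : Measure X} [IsFiniteMeasureOnCompacts μ]
    [NormedAddCommGroup E] [SecondCountableTopologyEither X E] {f : X → E} (hf : Continuous f)
    {K : Set X} (hK : IsCompact K) (p : ℝ≥0∞) : MemLp (K.indicator f) p μ := by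
  obtain ⟨C, hC⟩ := hK.exists_bound_of_continuousOn hf.continuousOn
  refine (HasCompactSupport.intro hK fun x hx => indicator_of_notMem hx f).memLp_of_bound
    (hf.aestronglyMeasurable.indicator hK.measurableSet) (max C 0) (.of_forall fun x => ?_)
  by_cases hx : x ∈ K
  · rw [indicator_of_mem hx]
    exact le_max_of_le_left (hC x hx)
  · simp [hx]

end Integrals

section Marginals

variable {α β E : Type*} [MeasurableSpace α] [MeasurableSpace β] {μ : Measure α} {ν : Measure β}
  [SigmaFinite μ] [SigmaFinite ν] [NormedAddCommGroup E] [NormedSpace ℝ E] [CompleteSpace E]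

theorem ae_integral_prod_left_eq_iff {h : α × β → E} {f : α → E} (hh : Integrable h (μ.prod ν))
    (hf : Integrable f μ) :
    (∀ᵐ x ∂μ, ∫ y, h (x, y) ∂ν = f x) ↔
      ∀ s, MeasurableSet s → ∫ p in s ×ˢ univ, h p ∂μ.prod ν = ∫ x in s, f x ∂μ := by
  have fubini (s : Set α) : ∫ p in s ×ˢ univ, h p ∂μ.prod ν = ∫ x in s, ∫ y, h (x, y) ∂ν ∂μ := by
    rw [setIntegral_prod _ hh.integrableOn, Measure.restrict_univ]
  refine ⟨fun hae s hs => (fubini s).trans (setIntegral_congr_ae hs (hae.mono fun x hx _ => hx)),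
    fun H => ?_⟩
  exact ae_eq_of_forall_setIntegral_eq_of_sigmaFinite
    (fun s _ _ => hh.integral_prod_left.integrableOn) (fun s _ _ => hf.integrableOn)
    fun s hs _ => (fubini s).symm.trans (H s hs)

theorem ae_integral_prod_right_eq_iff {h : α × β → E} {g : β → E} (hh : Integrable h (μ.prod ν))
    (hg : Integrable g ν) :
    (∀ᵐ y ∂ν, ∫ x, h (x, y) ∂μ = g y) ↔
      ∀ t, MeasurableSet t → ∫ p in univ ×ˢ t, h p ∂μ.prod ν = ∫ y in t, g y ∂ν := by
  simpa only [Function.comp_apply, Prod.swap_prod_mk, setIntegral_prod_swap] using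
    ae_integral_prod_left_eq_iff (h := h ∘ Prod.swap) hh.swap hg

end Marginals

section Constrained

variable {d : ℕ} {f g : (Fin d → ℝ) → ℝ} {hbar : (Fin d → ℝ) × (Fin d → ℝ) → ℝ}

local notation "𝓛" => (Fin d → ℝ) × (Fin d → ℝ) →₂[volume] ℝ

theorem InGammaBar.congr_ae {h₁ h₂ : (Fin d → ℝ) × (Fin d → ℝ) → ℝ} (hae : h₁ =ᵐ[volume] h₂)
    (H : InGammaBar f g hbar h₁) : InGammaBar f g hbar h₂ := by
  obtain ⟨⟨hint, h0, hm1, hm2⟩, hle⟩ := H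
  have hsec₁ : ∀ᵐ x, ∀ᵐ y, h₁ (x, y) = h₂ (x, y) := Measure.ae_ae_of_ae_prod hae
  have hsec₂ : ∀ᵐ y, ∀ᵐ x, h₁ (x, y) = h₂ (x, y) :=
    Measure.ae_ae_of_ae_prod (Measure.measurePreserving_swap.quasiMeasurePreserving.ae hae)
  refine ⟨⟨hint.congr hae, ?_, ?_, ?_⟩, ?_⟩
  · filter_upwards [h0, hae] with p hp he using he ▸ hp
  · filter_upwards [hsec₁, hm1] with x hx hfx using (integral_congr_ae hx).symm.trans hfx
  · filter_upwards [hsec₂, hm2] with y hy hgy using (integral_congr_ae hy).symm.trans hgy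
  · filter_upwards [hle, hae] with p hp he using he ▸ hp

/-- `Γ(f,g)^h̄` as a subset of `L²` with its weak topology. -/
def gammaBarWeak (f g : (Fin d → ℝ) → ℝ) (hbar : (Fin d → ℝ) × (Fin d → ℝ) → ℝ) :
    Set (WeakSpace ℝ 𝓛) :=
  {x | InGammaBar f g hbar ((toWeakSpace ℝ 𝓛).symm x)}

theorem InGammaBar.norm_le {h : (Fin d → ℝ) × (Fin d → ℝ) → ℝ} (H : InGammaBar f g hbar h) :
    ∀ᵐ p, ‖h p‖ ≤ ‖hbar p‖ := by
  filter_upwards [H.1.2.1, H.2] with p h0 hle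
  rw [Real.norm_of_nonneg h0]
  exact hle.trans (Real.le_norm_self _)

theorem InGammaBar.memLp {h : (Fin d → ℝ) × (Fin d → ℝ) → ℝ} (H : InGammaBar f g hbar h)
    (hbar2 : MemLp hbar 2 volume) : MemLp h 2 volume :=
  hbar2.of_le H.1.1.aestronglyMeasurable H.norm_le

theorem isBounded_gammaBarWeak (hbar2 : MemLp hbar 2 volume) :
    IsBounded (toWeakSpace ℝ 𝓛 ⁻¹' gammaBarWeak f g hbar) := by
  refine (Metric.isBounded_closedBall (x := 0) (r := ‖hbar2.toLp hbar‖)).subset fun u hu => ?_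
  refine mem_closedBall_zero_iff.2 (Lp.norm_le_norm_of_ae_le ?_)
  filter_upwards [hu.norm_le, hbar2.coeFn_toLp] with p hp hbar_eq
  rwa [hbar_eq]

/-- Intersecting with `K` makes the test sets of the marginal constraints of finite measure. -/
theorem inGammaBar_iff_forall_setIntegral {K : Set ((Fin d → ℝ) × (Fin d → ℝ))}
    (hf : Integrable f) (hg : Integrable g) (hbar_int : Integrable hbar)
    (hbar_zero : ∀ p ∉ K, hbar p = 0) (u : 𝓛) :
    InGammaBar f g hbar u ↔
      (∀ s, MeasurableSet s → volume s < ⊤ → 0 ≤ ∫ p in s, u p) ∧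
      (∀ s, MeasurableSet s → volume s < ⊤ → ∫ p in s, u p ≤ ∫ p in s, hbar p) ∧
      (∀ s, MeasurableSet s → ∫ p in s ×ˢ univ ∩ K, u p = ∫ x in s, f x) ∧
      (∀ t, MeasurableSet t → ∫ p in univ ×ˢ t ∩ K, u p = ∫ y in t, g y) := by
  have hu_loc : ∀ s, MeasurableSet s → volume s < ⊤ → IntegrableOn u s :=
    fun s _ hμs => integrableOn_Lp_of_measure_ne_top u one_le_two hμs.ne
  have hnonneg : 0 ≤ᵐ[volume] ⇑u ↔ ∀ s, MeasurableSet s → volume s < ⊤ → 0 ≤ ∫ p in s, u p := by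
    simpa using ae_le_iff_forall_setIntegral_le_of_sigmaFinite
      (f := 0) (fun s _ _ => integrableOn_zero) hu_loc
  have hle := ae_le_iff_forall_setIntegral_le_of_sigmaFinite hu_loc
    (fun s _ _ => hbar_int.integrableOn)
  have hinter {S} (hS : MeasurableSet S) (hK : ∀ᵐ p, p ∉ K → u p = 0) :
      ∫ p in S ∩ K, u p = ∫ p in S, u p :=
    (setIntegral_eq_of_subset_of_ae_sdiff_eq_zero hS.nullMeasurableSet inter_subset_left
      (hK.mono fun p hp hpS => hp fun hpK => hpS.2 ⟨hpS.1, hpK⟩)).symm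
  constructor
  · rintro ⟨⟨hu_int, hu0, hm1, hm2⟩, hu_le⟩
    have hK := ae_eq_zero_of_notMem_of_ae_le hu0 hu_le hbar_zero
    refine ⟨hnonneg.1 hu0, hle.1 hu_le, fun s hs => ?_, fun t ht => ?_⟩
    · rw [hinter (hs.prod .univ) hK]
      exact (ae_integral_prod_left_eq_iff hu_int hf).1 hm1 s hs
    · rw [hinter (MeasurableSet.univ.prod ht) hK]
      exact (ae_integral_prod_right_eq_iff hu_int hg).1 hm2 t ht
  · rintro ⟨h0, hbar_le, hm1, hm2⟩
    have hu0 := hnonneg.2 h0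
    have hu_le := hle.2 hbar_le
    have hK := ae_eq_zero_of_notMem_of_ae_le hu0 hu_le hbar_zero
    have hu_int : Integrable u := hbar_int.mono' (Lp.aestronglyMeasurable u) <| by
      filter_upwards [hu0, hu_le] with p hp0 hple
      rwa [Real.norm_of_nonneg hp0]
    refine ⟨⟨hu_int, hu0, (ae_integral_prod_left_eq_iff hu_int hf).2 fun s hs => ?_,
      (ae_integral_prod_right_eq_iff hu_int hg).2 fun t ht => ?_⟩, hu_le⟩
    · exact (hinter (hs.prod .univ) hK).symm.trans (hm1 s hs)
    · exact (hinter (MeasurableSet.univ.prod ht) hK).symm.trans (hm2 t ht)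

theorem isClosed_gammaBarWeak {K : Set ((Fin d → ℝ) × (Fin d → ℝ))}
    (hf : Integrable f) (hg : Integrable g) (hbar_int : Integrable hbar)
    (hK : MeasurableSet K) (hKfin : volume K ≠ ⊤) (hbar_zero : ∀ p ∉ K, hbar p = 0) :
    IsClosed (gammaBarWeak f g hbar) := by
  have hfin (S : Set ((Fin d → ℝ) × (Fin d → ℝ))) : volume (S ∩ K) ≠ ⊤ :=
    measure_ne_top_of_subset inter_subset_right hKfin
  simp only [gammaBarWeak, inGammaBar_iff_forall_setIntegral hf hg hbar_int hbar_zero,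
    ofPred_and, ofPred_forall]
  refine .inter ?_ (.inter ?_ (.inter ?_ ?_)) <;>
    refine isClosed_iInter fun s => isClosed_iInter fun hs => ?_
  · exact isClosed_iInter fun hμs =>
      isClosed_le continuous_const (L2.continuous_setIntegral_toWeakSpace_symm hs hμs.ne)
  · exact isClosed_iInter fun hμs =>
      isClosed_le (L2.continuous_setIntegral_toWeakSpace_symm hs hμs.ne) continuous_const
  · exact isClosed_eq
      (L2.continuous_setIntegral_toWeakSpace_symm ((hs.prod .univ).inter hK) (hfin _))
      continuous_const
  · exact isClosed_eq
      (L2.continuous_setIntegral_toWeakSpace_symm ((MeasurableSet.univ.prod hs).inter hK) (hfin _))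
      continuous_const

theorem Icost_eq_integral_indicator_mul {c h : (Fin d → ℝ) × (Fin d → ℝ) → ℝ}
    {K : Set ((Fin d → ℝ) × (Fin d → ℝ))} (hK : ∀ᵐ p, p ∉ K → h p = 0) :
    Icost c h = ∫ p, K.indicator c p * h p := by
  refine integral_congr_ae ?_
  filter_upwards [hK] with p hp
  by_cases hpK : p ∈ K <;> simp [hpK, hp]

theorem exists_mem_gammaBarWeak_Icost_eq {c h : (Fin d → ℝ) × (Fin d → ℝ) → ℝ}
    (hbar2 : MemLp hbar 2 volume) (H : InGammaBar f g hbar h) :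
    ∃ x ∈ gammaBarWeak f g hbar, Icost c ((toWeakSpace ℝ 𝓛).symm x) = Icost c h := by
  have H2 := H.memLp hbar2
  refine ⟨toWeakSpace ℝ 𝓛 (H2.toLp h), H.congr_ae H2.coeFn_toLp.symm, ?_⟩
  exact integral_congr_ae (H2.coeFn_toLp.mono fun p hp => by simp [hp])

theorem continuousOn_Icost_gammaBarWeak {c : (Fin d → ℝ) × (Fin d → ℝ) → ℝ}
    {K : Set ((Fin d → ℝ) × (Fin d → ℝ))} (hcK : MemLp (K.indicator c) 2 volume)
    (hbar_zero : ∀ p ∉ K, hbar p = 0) :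
    ContinuousOn (fun x => Icost c ((toWeakSpace ℝ 𝓛).symm x)) (gammaBarWeak f g hbar) :=
  (L2.continuous_integral_mul_toWeakSpace_symm hcK).continuousOn.congr fun _ hx =>
    Icost_eq_integral_indicator_mul (ae_eq_zero_of_notMem_of_ae_le hx.1.2.1 hx.2 hbar_zero)

end Constrained

theorem existence_constrained (d : ℕ)
    (c : ((Fin d → ℝ) × (Fin d → ℝ)) → ℝ)
    (hc_cont : Continuous c)
    (hbar : ((Fin d → ℝ) × (Fin d → ℝ)) → ℝ)
    (hbar_meas : Measurable hbar) (hbar_nonneg : ∀ p, 0 ≤ hbar p)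
    (hbar_bdd : ∃ M, ∀ᵐ p ∂volume, hbar p ≤ M)
    (hbar_supp : HasCompactSupport hbar)
    (f g : (Fin d → ℝ) → ℝ)
    (hf_int : Integrable f volume) (hg_int : Integrable g volume)
    (hne : ∃ h, InGammaBar f g hbar h) :
    ∃ hstar, InGammaBar f g hbar hstar ∧
      ∀ h, InGammaBar f g hbar h → Icost c hstar ≤ Icost c h := by
  obtain ⟨M, hM⟩ := hbar_bdd
  have hbar_zero : ∀ p ∉ tsupport hbar, hbar p = 0 := fun p => image_eq_zero_of_notMem_tsupport
  have hbar_memLp (q : ℝ≥0∞) : MemLp hbar q volume :=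
    hbar_supp.memLp_of_bound hbar_meas.aestronglyMeasurable M <|
      hM.mono fun p hp => by rwa [Real.norm_of_nonneg (hbar_nonneg p)]
  have hS : IsCompact (gammaBarWeak f g hbar) :=
    WeakSpace.isCompact_of_isBounded_of_isClosed (isBounded_gammaBarWeak (hbar_memLp 2))
      (isClosed_gammaBarWeak hf_int hg_int (memLp_one_iff_integrable.1 (hbar_memLp 1))
        (isClosed_tsupport hbar).measurableSet hbar_supp.measure_lt_top.ne hbar_zero)
  obtain ⟨h₀, H₀⟩ := hne
  obtain ⟨x, hxS, hmin⟩ := hS.exists_isMinOn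
    ((exists_mem_gammaBarWeak_Icost_eq (c := c) (hbar_memLp 2) H₀).imp fun _ => And.left)
    (continuousOn_Icost_gammaBarWeak (hc_cont.memLp_indicator_of_isCompact hbar_supp 2) hbar_zero)
  refine ⟨_, hxS, fun h H => ?_⟩
  obtain ⟨y, hyS, hy⟩ := exists_mem_gammaBarWeak_Icost_eq (hbar_memLp 2) H
  exact (isMinOn_iff.1 hmin y hyS).trans_eq hy
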